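/- arXiv:0807.3502 — 4 statements merged into one kernel-verified Lean document; each statement's English description precedes it below -/
import Mathlib

section
/- In the folding setup, suppose the Γ-orbit Γ·j of an index j ∈ ι consists of pairwise non-adjacent vertices, i.e. for all distinct k, l ∈ Γ·j one has ¬Adj(k,l). Then B(e_j, e_j) = 2/|Γ·j| (in particular B(e_j, e_j) ≠ 0), and for every i ∈ ι with i ∉ Γ·j one has 2·B(e_j, e_i)/B(e_j, e_j) = Σ_{k ∈ Γ·j} B(f_k, f_i). -/
/-!
Since the orbit `Γ·j` is pairwise non-adjacent, `B(f_k, f_l) = 2 δ_{kl}` on it, so expanding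
`e_j = |Γ·j|⁻¹ ∑_{k ∈ Γ·j} f_k` gives `B(e_j, e_j) = 2 / |Γ·j|`. Because `Γ` preserves `Adj`, it
preserves `B` on basis vectors and permutes `Γ·j`, so the row sum `∑_{k ∈ Γ·j} B(f_k, f_l)` is
constant for `l` in an orbit `Γ·i`; averaging over `l` gives
`B(e_j, e_i) = |Γ·j|⁻¹ ∑_{k ∈ Γ·j} B(f_k, f_i)`.
-/

open Finset

theorem LinearMap.BilinForm.smul_sum_apply_smul_sum {R M ι : Type*} [CommSemiring R]
    [AddCommMonoid M] [Module R M] (B : LinearMap.BilinForm R M) (a b : R) (s t : Finset ι)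
    (v w : ι → M) :
    B (a • ∑ k ∈ s, v k) (b • ∑ l ∈ t, w l) = a * b * ∑ k ∈ s, ∑ l ∈ t, B (v k) (w l) := by
  rw [smul_left, smul_right, sum_left]
  simp only [sum_right, mul_assoc]

theorem Finset.sum_comp_perm_right_of_image_eq {ι M : Type*} [AddCommMonoid M] [DecidableEq ι]
    {s : Finset ι} (σ : Equiv.Perm ι) (hs : s.image σ = s) (g : ι → ι → M)
    (hg : ∀ a b, g (σ a) (σ b) = g a b) (i : ι) :
    ∑ k ∈ s, g k (σ i) = ∑ k ∈ s, g k i := by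
  conv_lhs => rw [← hs]
  rw [sum_image fun a _ b _ h => σ.injective h]
  exact sum_congr rfl fun k _ => hg k i

section Folding

variable {ι : Type*} [DecidableEq ι]

def permOrbit {Γ : Type*} [Group Γ] [Fintype Γ] (φ : Γ →* Equiv.Perm ι) (i : ι) : Finset ι :=
  univ.image fun γ => φ γ i

def normalizedIndicator (K : Type*) [DivisionRing K] (s : Finset ι) : ι → K :=
  (#s : K)⁻¹ • ∑ k ∈ s, Pi.single k 1

structure IsDynkinForm {R : Type*} [CommRing R] (Adj : ι → ι → Prop)
    (B : LinearMap.BilinForm R (ι → R)) : Prop where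
  apply_self : ∀ i, B (Pi.single i 1) (Pi.single i 1) = 2
  apply_of_adj : ∀ i j, i ≠ j → Adj i j → B (Pi.single i 1) (Pi.single j 1) = -1
  apply_of_not_adj : ∀ i j, i ≠ j → ¬ Adj i j → B (Pi.single i 1) (Pi.single j 1) = 0

section Orbit

variable {Γ : Type*} [Group Γ] [Fintype Γ] (φ : Γ →* Equiv.Perm ι)

theorem mem_permOrbit {i l : ι} : l ∈ permOrbit φ i ↔ ∃ γ, φ γ i = l := by
  simp [permOrbit]

theorem mem_permOrbit_self (i : ι) : i ∈ permOrbit φ i :=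
  (mem_permOrbit φ).2 ⟨1, by simp⟩

theorem image_permOrbit (γ : Γ) (i : ι) : (permOrbit φ i).image (φ γ) = permOrbit φ i := by
  ext l
  simp only [mem_image, mem_permOrbit]
  constructor
  · rintro ⟨_, ⟨δ, rfl⟩, rfl⟩
    exact ⟨γ * δ, by simp⟩
  · rintro ⟨δ, rfl⟩
    exact ⟨φ (γ⁻¹ * δ) i, ⟨γ⁻¹ * δ, rfl⟩, by simp⟩

end Orbit

namespace IsDynkinForm

variable {R : Type*} [CommRing R] {Adj : ι → ι → Prop} {B : LinearMap.BilinForm R (ι → R)}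

theorem apply_single_perm (hB : IsDynkinForm Adj B) (σ : Equiv.Perm ι)
    (hσ : ∀ i j, Adj (σ i) (σ j) ↔ Adj i j) (a b : ι) :
    B (Pi.single (σ a) 1) (Pi.single (σ b) 1) = B (Pi.single a 1) (Pi.single b 1) := by
  obtain rfl | hab := eq_or_ne a b
  · rw [hB.apply_self, hB.apply_self]
  have hσab : σ a ≠ σ b := σ.injective.ne hab
  by_cases hadj : Adj a b
  · rw [hB.apply_of_adj _ _ hσab ((hσ a b).2 hadj), hB.apply_of_adj _ _ hab hadj]
  · rw [hB.apply_of_not_adj _ _ hσab (mt (hσ a b).1 hadj), hB.apply_of_not_adj _ _ hab hadj]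

theorem sum_sum_apply_single_of_pairwise (hB : IsDynkinForm Adj B) {s : Finset ι}
    (hs : (s : Set ι).Pairwise fun k l => ¬ Adj k l) :
    ∑ k ∈ s, ∑ l ∈ s, B (Pi.single k 1) (Pi.single l 1) = 2 * #s := by
  have hrow : ∀ k ∈ s, ∑ l ∈ s, B (Pi.single k 1) (Pi.single l 1) = 2 := fun k hk => by
    rw [sum_eq_single_of_mem k hk fun l hl hlk => hB.apply_of_not_adj _ _ hlk.symm
      (hs hk hl hlk.symm), hB.apply_self]
  rw [sum_congr rfl hrow, sum_const, nsmul_eq_mul, mul_comm]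

theorem sum_apply_single_eq_of_mem_permOrbit (hB : IsDynkinForm Adj B) {Γ : Type*} [Group Γ]
    [Fintype Γ] {φ : Γ →* Equiv.Perm ι} (hφ : ∀ γ i j, Adj (φ γ i) (φ γ j) ↔ Adj i j)
    (j : ι) {i l : ι} (hl : l ∈ permOrbit φ i) :
    ∑ k ∈ permOrbit φ j, B (Pi.single k 1) (Pi.single l 1)
      = ∑ k ∈ permOrbit φ j, B (Pi.single k 1) (Pi.single i 1) := by
  obtain ⟨γ, rfl⟩ := (mem_permOrbit φ).1 hl
  exact sum_comp_perm_right_of_image_eq (φ γ) (image_permOrbit φ γ j)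
    (fun k l => B (Pi.single k 1) (Pi.single l 1)) (hB.apply_single_perm (φ γ) (hφ γ)) i

end IsDynkinForm

variable {K : Type*} [Field K] [CharZero K] {B : LinearMap.BilinForm K (ι → K)}

theorem IsDynkinForm.apply_normalizedIndicator_self {Adj : ι → ι → Prop}
    (hB : IsDynkinForm Adj B) {s : Finset ι} (hne : s.Nonempty)
    (hs : (s : Set ι).Pairwise fun k l => ¬ Adj k l) :
    B (normalizedIndicator K s) (normalizedIndicator K s) = 2 / #s := by
  have hcard : (#s : K) ≠ 0 := by exact_mod_cast hne.card_pos.ne'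
  rw [normalizedIndicator, B.smul_sum_apply_smul_sum, hB.sum_sum_apply_single_of_pairwise hs]
  field_simp

theorem apply_normalizedIndicator_of_sum_eq {s t : Finset ι} (ht : t.Nonempty) {c : K}
    (hc : ∀ l ∈ t, ∑ k ∈ s, B (Pi.single k 1) (Pi.single l 1) = c) :
    B (normalizedIndicator K s) (normalizedIndicator K t) = (#s : K)⁻¹ * c := by
  have hcard : (#t : K) ≠ 0 := by exact_mod_cast ht.card_pos.ne'
  rw [normalizedIndicator, normalizedIndicator, B.smul_sum_apply_smul_sum, sum_comm,
    sum_congr rfl hc, sum_const, nsmul_eq_mul]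
  field_simp

end Folding

theorem stmt_1_general (ι : Type*) [DecidableEq ι]
    (Adj : ι → ι → Prop)
    (B : LinearMap.BilinForm ℚ (ι → ℚ))
    (hBdiag : ∀ i : ι, B (Pi.single i 1) (Pi.single i 1) = 2)
    (hBadj : ∀ i j : ι, i ≠ j → Adj i j → B (Pi.single i 1) (Pi.single j 1) = -1)
    (hBnadj : ∀ i j : ι, i ≠ j → ¬ Adj i j → B (Pi.single i 1) (Pi.single j 1) = 0)
    (Γ : Type*) [Group Γ] [Fintype Γ]
    (φ : Γ →* Equiv.Perm ι)
    (hφ : ∀ (γ : Γ) (i j : ι), Adj (φ γ i) (φ γ j) ↔ Adj i j)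
    (orb : ι → Finset ι)
    (horb : ∀ i : ι, orb i = Finset.image (fun γ : Γ => φ γ i) Finset.univ)
    (e : ι → (ι → ℚ))
    (he : ∀ i : ι, e i = (((orb i).card : ℚ))⁻¹ • ∑ k ∈ orb i, Pi.single k (1 : ℚ))
    (j : ι)
    (hnonadj : ∀ k ∈ orb j, ∀ l ∈ orb j, k ≠ l → ¬ Adj k l) :
    B (e j) (e j) = 2 / ((orb j).card : ℚ) ∧
    B (e j) (e j) ≠ 0 ∧
    (∀ i : ι, i ∉ orb j →
      2 * B (e j) (e i) / B (e j) (e j)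
        = ∑ k ∈ orb j, B (Pi.single k 1) (Pi.single i 1)) := by
  obtain rfl : orb = permOrbit φ := funext horb
  obtain rfl : e = fun i => normalizedIndicator ℚ (permOrbit φ i) := funext he
  have hB : IsDynkinForm Adj B := ⟨hBdiag, hBadj, hBnadj⟩
  have hself := hB.apply_normalizedIndicator_self ⟨j, mem_permOrbit_self φ j⟩
    fun k hk l hl hkl => hnonadj k hk l hl hkl
  refine ⟨hself, by rw [hself]; positivity, fun i _ => ?_⟩
  rw [hself, apply_normalizedIndicator_of_sum_eq ⟨i, mem_permOrbit_self φ i⟩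
    fun l hl => hB.sum_apply_single_eq_of_mem_permOrbit hφ j hl]
  field_simp

theorem stmt_1 (ι : Type*) [Fintype ι] [DecidableEq ι]
    (Adj : ι → ι → Prop)
    (hAdjSymm : ∀ i j, Adj i j → Adj j i)
    (hAdjIrr : ∀ i, ¬ Adj i i)
    (B : LinearMap.BilinForm ℚ (ι → ℚ))
    (hBsymm : ∀ v w, B v w = B w v)
    (hBdiag : ∀ i : ι, B (Pi.single i 1) (Pi.single i 1) = 2)
    (hBadj : ∀ i j : ι, i ≠ j → Adj i j → B (Pi.single i 1) (Pi.single j 1) = -1)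
    (hBnadj : ∀ i j : ι, i ≠ j → ¬ Adj i j → B (Pi.single i 1) (Pi.single j 1) = 0)
    (Γ : Type*) [Group Γ] [Fintype Γ]
    (φ : Γ →* Equiv.Perm ι)
    (hφ : ∀ (γ : Γ) (i j : ι), Adj (φ γ i) (φ γ j) ↔ Adj i j)
    (orb : ι → Finset ι)
    (horb : ∀ i : ι, orb i = Finset.image (fun γ : Γ => φ γ i) Finset.univ)
    (e : ι → (ι → ℚ))
    (he : ∀ i : ι, e i = (((orb i).card : ℚ))⁻¹ • ∑ k ∈ orb i, Pi.single k (1 : ℚ))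
    (j : ι)
    (hnonadj : ∀ k ∈ orb j, ∀ l ∈ orb j, k ≠ l → ¬ Adj k l) :
    B (e j) (e j) = 2 / ((orb j).card : ℚ) ∧
    B (e j) (e j) ≠ 0 ∧
    (∀ i : ι, i ∉ orb j →
      2 * B (e j) (e i) / B (e j) (e j)
        = ∑ k ∈ orb j, B (Pi.single k 1) (Pi.single i 1)) :=
  stmt_1_general ι Adj B hBdiag hBadj hBnadj Γ φ hφ orb horb e he j hnonadj
end

section
/- In the folding setup, suppose the Γ-orbit of an index j ∈ ι is a pair Γ·j = {j, j'} with j ≠ j' and Adj(j, j'). Then B(e_j, e_j) = 1/2, and for every i ∈ ι with i ∉ Γ·j one has 2·B(e_j, e_i)/B(e_j, e_j) = 2 · Σ_{k ∈ Γ·j} B(f_k, f_i). -/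
/-!
`B(f_a, f_b)` depends only on whether `a = b` and whether `Adj a b`, so it is invariant under
every permutation preserving `Adj`. Hence `l ↦ ∑_{k ∈ Γ·j} B(f_k, f_l)` is constant on each orbit
`Γ·i`, and `B(e_j, e_i) = |Γ·j|⁻¹ ∑_{k ∈ Γ·j} B(f_k, f_i)`. For the orbit `{j, j'}` this gives
`B(e_j, e_j) = (2 + 2 - 1 - 1)/4 = 1/2` and `B(e_j, e_i) = ½ ∑_{k ∈ Γ·j} B(f_k, f_i)`.
-/

namespace Folding

open Finset

variable {ι : Type*} [DecidableEq ι]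

section Orbit

variable {Γ : Type*} [Group Γ] [Fintype Γ] (φ : Γ →* Equiv.Perm ι)

def permOrbit (i : ι) : Finset ι := univ.image fun γ : Γ => φ γ i

lemma mem_permOrbit_self (i : ι) : i ∈ permOrbit φ i :=
  mem_image.2 ⟨1, mem_univ _, by simp⟩

lemma map_permOrbit (γ : Γ) (i : ι) :
    (permOrbit φ i).map (φ γ).toEmbedding = permOrbit φ i := by
  ext k
  simp only [permOrbit, mem_map, mem_image, mem_univ, true_and, Equiv.coe_toEmbedding]
  constructor
  · rintro ⟨_, ⟨δ, rfl⟩, rfl⟩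
    exact ⟨γ * δ, by simp⟩
  · rintro ⟨δ, rfl⟩
    exact ⟨φ (γ⁻¹ * δ) i, ⟨_, rfl⟩, by simp⟩

lemma sum_permOrbit_comp {M : Type*} [AddCommMonoid M] (f : ι → M) (γ : Γ) (i : ι) :
    ∑ k ∈ permOrbit φ i, f (φ γ k) = ∑ k ∈ permOrbit φ i, f k := by
  conv_rhs => rw [← map_permOrbit φ γ i, sum_map]
  rfl

variable {M : Type*} [AddCommMonoid M] {g : ι → ι → M}

lemma sum_permOrbit_apply_of_invariant (hg : ∀ γ a b, g (φ γ a) (φ γ b) = g a b)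
    (j i : ι) (γ : Γ) :
    ∑ k ∈ permOrbit φ j, g k (φ γ i) = ∑ k ∈ permOrbit φ j, g k i :=
  calc ∑ k ∈ permOrbit φ j, g k (φ γ i)
      = ∑ k ∈ permOrbit φ j, g (φ γ k) (φ γ i) :=
        (sum_permOrbit_comp φ (fun k => g k (φ γ i)) γ j).symm
    _ = ∑ k ∈ permOrbit φ j, g k i := sum_congr rfl fun k _ => hg γ k i

lemma sum_permOrbit_sum_permOrbit_of_invariant (hg : ∀ γ a b, g (φ γ a) (φ γ b) = g a b)
    (j i : ι) :
    ∑ k ∈ permOrbit φ j, ∑ l ∈ permOrbit φ i, g k l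
      = #(permOrbit φ i) • ∑ k ∈ permOrbit φ j, g k i := by
  rw [sum_comm, ← sum_const]
  refine sum_congr rfl fun l hl => ?_
  obtain ⟨γ, -, rfl⟩ := mem_image.1 hl
  exact sum_permOrbit_apply_of_invariant φ hg j i γ

end Orbit

lemma bilinForm_smul_sum_single {R : Type*} [CommSemiring R] (B : LinearMap.BilinForm R (ι → R))
    (s t : Finset ι) (c d : R) :
    B (c • ∑ k ∈ s, Pi.single k 1) (d • ∑ l ∈ t, Pi.single l 1)
      = c * d * ∑ k ∈ s, ∑ l ∈ t, B (Pi.single k 1) (Pi.single l 1) := by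
  simp only [map_smul, LinearMap.smul_apply, map_sum, LinearMap.sum_apply, smul_eq_mul]
  rw [← mul_sum, sum_comm]
  ring

lemma bilinForm_single_perm {R : Type*} [CommRing R] (Adj : ι → ι → Prop)
    (B : LinearMap.BilinForm R (ι → R))
    (hBdiag : ∀ i : ι, B (Pi.single i 1) (Pi.single i 1) = 2)
    (hBadj : ∀ i j : ι, i ≠ j → Adj i j → B (Pi.single i 1) (Pi.single j 1) = -1)
    (hBnadj : ∀ i j : ι, i ≠ j → ¬ Adj i j → B (Pi.single i 1) (Pi.single j 1) = 0)
    (σ : Equiv.Perm ι) (hσ : ∀ a b, Adj (σ a) (σ b) ↔ Adj a b) (a b : ι) :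
    B (Pi.single (σ a) 1) (Pi.single (σ b) 1) = B (Pi.single a 1) (Pi.single b 1) := by
  obtain rfl | hab := eq_or_ne a b
  · rw [hBdiag, hBdiag]
  have hσab : σ a ≠ σ b := σ.injective.ne hab
  by_cases hAdj : Adj a b
  · rw [hBadj _ _ hσab ((hσ a b).2 hAdj), hBadj _ _ hab hAdj]
  · rw [hBnadj _ _ hσab (mt (hσ a b).1 hAdj), hBnadj _ _ hab hAdj]

lemma bilinForm_orbit_mean {K : Type*} [Field K] [CharZero K]
    {Γ : Type*} [Group Γ] [Fintype Γ] (φ : Γ →* Equiv.Perm ι) (B : LinearMap.BilinForm K (ι → K))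
    (hB : ∀ γ a b, B (Pi.single (φ γ a) 1) (Pi.single (φ γ b) 1)
      = B (Pi.single a 1) (Pi.single b 1))
    (j i : ι) :
    B ((#(permOrbit φ j) : K)⁻¹ • ∑ k ∈ permOrbit φ j, Pi.single k 1)
        ((#(permOrbit φ i) : K)⁻¹ • ∑ l ∈ permOrbit φ i, Pi.single l 1)
      = (#(permOrbit φ j) : K)⁻¹ * ∑ k ∈ permOrbit φ j, B (Pi.single k 1) (Pi.single i 1) := by
  have hcard : (#(permOrbit φ i) : K) ≠ 0 :=
    Nat.cast_ne_zero.2 (card_ne_zero_of_mem (mem_permOrbit_self φ i))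
  rw [bilinForm_smul_sum_single, sum_permOrbit_sum_permOrbit_of_invariant φ hB, nsmul_eq_mul]
  field_simp

end Folding

theorem stmt_2_general (ι : Type*) [DecidableEq ι]
    (Adj : ι → ι → Prop)
    (hAdjSymm : ∀ i j, Adj i j → Adj j i)
    (B : LinearMap.BilinForm ℚ (ι → ℚ))
    (hBdiag : ∀ i : ι, B (Pi.single i 1) (Pi.single i 1) = 2)
    (hBadj : ∀ i j : ι, i ≠ j → Adj i j → B (Pi.single i 1) (Pi.single j 1) = -1)
    (hBnadj : ∀ i j : ι, i ≠ j → ¬ Adj i j → B (Pi.single i 1) (Pi.single j 1) = 0)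
    (Γ : Type*) [Group Γ] [Fintype Γ]
    (φ : Γ →* Equiv.Perm ι)
    (hφ : ∀ (γ : Γ) (i j : ι), Adj (φ γ i) (φ γ j) ↔ Adj i j)
    (orb : ι → Finset ι)
    (horb : ∀ i : ι, orb i = Finset.image (fun γ : Γ => φ γ i) Finset.univ)
    (e : ι → (ι → ℚ))
    (he : ∀ i : ι, e i = (((orb i).card : ℚ))⁻¹ • ∑ k ∈ orb i, Pi.single k (1 : ℚ))
    (j j' : ι)
    (hne : j ≠ j')
    (hadj : Adj j j')
    (hpair : orb j = {j, j'}) :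
    B (e j) (e j) = 1 / 2 ∧
    (∀ i : ι, i ∉ orb j →
      2 * B (e j) (e i) / B (e j) (e j)
        = 2 * ∑ k ∈ orb j, B (Pi.single k 1) (Pi.single i 1)) := by
  obtain rfl : orb = Folding.permOrbit φ := funext horb
  have hcard : ((Folding.permOrbit φ j).card : ℚ) = 2 := by
    rw [hpair, Finset.card_pair hne]
    norm_num
  have hBjj : B (e j) (e j) = 1 / 2 := by
    rw [he, Folding.bilinForm_smul_sum_single, hcard, hpair, Finset.sum_pair hne,
      Finset.sum_pair hne, Finset.sum_pair hne, hBdiag, hBdiag, hBadj _ _ hne hadj,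
      hBadj _ _ hne.symm (hAdjSymm _ _ hadj)]
    norm_num
  refine ⟨hBjj, fun i _ => ?_⟩
  have hφB := fun γ => Folding.bilinForm_single_perm Adj B hBdiag hBadj hBnadj (φ γ) (hφ γ)
  rw [hBjj, he, he, Folding.bilinForm_orbit_mean φ B hφB, hcard]
  ring

theorem stmt_2 (ι : Type*) [Fintype ι] [DecidableEq ι]
    (Adj : ι → ι → Prop)
    (hAdjSymm : ∀ i j, Adj i j → Adj j i)
    (hAdjIrr : ∀ i, ¬ Adj i i)
    (B : LinearMap.BilinForm ℚ (ι → ℚ))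
    (hBsymm : ∀ v w, B v w = B w v)
    (hBdiag : ∀ i : ι, B (Pi.single i 1) (Pi.single i 1) = 2)
    (hBadj : ∀ i j : ι, i ≠ j → Adj i j → B (Pi.single i 1) (Pi.single j 1) = -1)
    (hBnadj : ∀ i j : ι, i ≠ j → ¬ Adj i j → B (Pi.single i 1) (Pi.single j 1) = 0)
    (Γ : Type*) [Group Γ] [Fintype Γ]
    (φ : Γ →* Equiv.Perm ι)
    (hφ : ∀ (γ : Γ) (i j : ι), Adj (φ γ i) (φ γ j) ↔ Adj i j)
    (orb : ι → Finset ι)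
    (horb : ∀ i : ι, orb i = Finset.image (fun γ : Γ => φ γ i) Finset.univ)
    (e : ι → (ι → ℚ))
    (he : ∀ i : ι, e i = (((orb i).card : ℚ))⁻¹ • ∑ k ∈ orb i, Pi.single k (1 : ℚ))
    (j j' : ι)
    (hne : j ≠ j')
    (hadj : Adj j j')
    (hpair : orb j = {j, j'}) :
    B (e j) (e j) = 1 / 2 ∧
    (∀ i : ι, i ∉ orb j →
      2 * B (e j) (e i) / B (e j) (e j)
        = 2 * ∑ k ∈ orb j, B (Pi.single k 1) (Pi.single i 1)) :=
  stmt_2_general ι Adj hAdjSymm B hBdiag hBadj hBnadj Γ φ hφ orb horb e he j j' hne hadj hpair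
end

section
/- In the folding setup, assume that every Γ-orbit in ι either consists of pairwise non-adjacent vertices, or is a two-element orbit {j, j'} with Adj(j, j'). Then for all i, j ∈ ι the quantity e_j^∨(e_i) := 2·B(e_j, e_i)/B(e_j, e_j) is an integer, and the reflection ρ_j : V → V defined by ρ_j(x) = x − (2·B(x, e_j)/B(e_j, e_j))·e_j maps the ℤ-submodule Λ := span_ℤ{e_i : i ∈ ι} of V onto itself. -/
/-!
Since Γ preserves `Adj`, the form satisfies `B(f_{γk}, f_{γl}) = B(f_k, f_l)`, so `B(e_j, f_l)` is
constant for `l` in an orbit and `B(e_j, e_i) = S_{ji} / |Γ·j|` with the integer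
`S_{ji} = ∑_{k ∈ Γ·j} B(f_k, f_i)`. The hypothesis on the orbits gives `S_{jj} = 2` (no edges in
the orbit) or `S_{jj} = 1` (one edge), so `2 B(e_j, e_i) / B(e_j, e_j) = 2 S_{ji} / S_{jj}` is an
integer. A reflection `y ↦ y - f(y) x` with `x ∈ Λ` and `f` integral on the generators of `Λ` maps
`Λ` into itself, and being an involution it maps `Λ` onto itself.
-/

open Finset Submodule

namespace Module

theorem image_reflection_span_int {R M ι : Type*} [CommRing R] [AddCommGroup M] [Module R M]
    {x : M} {f : Dual R M} (h : f x = 2) {v : ι → M} (hx : x ∈ span ℤ (Set.range v))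
    (hf : ∀ i, ∃ n : ℤ, f (v i) = n) :
    reflection h '' (span ℤ (Set.range v) : Set M) = span ℤ (Set.range v) := by
  refine (bijOn_reflection_of_mapsTo h fun y hy => ?_).image_eq
  induction hy using span_induction with
  | mem y hy =>
    obtain ⟨i, rfl⟩ := hy
    obtain ⟨n, hn⟩ := hf i
    rw [SetLike.mem_coe, reflection_apply, hn, Int.cast_smul_eq_zsmul]
    exact sub_mem (subset_span ⟨i, rfl⟩) (zsmul_mem hx n)
  | zero => simp
  | add y z _ _ hy hz => rw [SetLike.mem_coe, map_add]; exact add_mem hy hz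
  | smul n y _ hy => rw [SetLike.mem_coe, map_zsmul]; exact zsmul_mem hy n

end Module

namespace LinearMap.BilinForm

theorem image_reflection_span_int {K M ι : Type*} [Field K] [AddCommGroup M] [Module K M]
    {B : LinearMap.BilinForm K M} (hB : ∀ x y, B x y = B y x) {v : ι → M} {j : ι}
    (hj : B (v j) (v j) ≠ 0) (hint : ∀ i, ∃ n : ℤ, 2 * B (v j) (v i) / B (v j) (v j) = n) :
    (fun x => x - (2 * B x (v j) / B (v j) (v j)) • v j) '' (span ℤ (Set.range v) : Set M) =
      span ℤ (Set.range v) := by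
  set f : Module.Dual K M := (2 / B (v j) (v j)) • B.flip (v j)
  have hf : ∀ x, f x = 2 * B x (v j) / B (v j) (v j) := fun x => by
    simp only [f, LinearMap.smul_apply, flip_apply, smul_eq_mul]; ring
  have hfj : f (v j) = 2 := by rw [hf]; field_simp
  have hrefl : (fun x => x - (2 * B x (v j) / B (v j) (v j)) • v j) = Module.reflection hfj :=
    funext fun x => by rw [Module.reflection_apply, hf]
  rw [hrefl]
  exact Module.image_reflection_span_int hfj (subset_span ⟨j, rfl⟩) fun i => by
    rw [hf, hB]; exact hint i

end LinearMap.BilinForm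

section Folding

variable {ι Γ : Type*}

open Classical in
noncomputable def cartanEntry (Adj : ι → ι → Prop) (i j : ι) : ℤ :=
  if i = j then 2 else if Adj i j then -1 else 0

theorem cartanEntry_perm {Adj : ι → ι → Prop} {σ : Equiv.Perm ι}
    (hσ : ∀ i j, Adj (σ i) (σ j) ↔ Adj i j) (i j : ι) :
    cartanEntry Adj (σ i) (σ j) = cartanEntry Adj i j := by
  unfold cartanEntry
  rw [propext σ.injective.eq_iff, propext (hσ i j)]

variable [DecidableEq ι]

theorem bilin_single_eq_cartanEntry {R : Type*} [CommRing R] {Adj : ι → ι → Prop}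
    {B : LinearMap.BilinForm R (ι → R)}
    (hdiag : ∀ i, B (Pi.single i 1) (Pi.single i 1) = 2)
    (hadj : ∀ i j, i ≠ j → Adj i j → B (Pi.single i 1) (Pi.single j 1) = -1)
    (hnadj : ∀ i j, i ≠ j → ¬ Adj i j → B (Pi.single i 1) (Pi.single j 1) = 0) (i j : ι) :
    B (Pi.single i 1) (Pi.single j 1) = cartanEntry Adj i j := by
  unfold cartanEntry
  split_ifs with hij hA
  · subst hij; simp [hdiag]
  · simp [hadj i j hij hA]
  · simp [hnadj i j hij hA]

variable [Monoid Γ] [Fintype Γ] (φ : Γ →* Equiv.Perm ι)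

def orbitFinset (i : ι) : Finset ι := univ.image fun γ => φ γ i

theorem mem_orbitFinset {i l : ι} : l ∈ orbitFinset φ i ↔ ∃ γ, φ γ i = l := by
  simp [orbitFinset]

theorem mem_orbitFinset_self (i : ι) : i ∈ orbitFinset φ i :=
  (mem_orbitFinset φ).2 ⟨1, by simp⟩

theorem image_orbitFinset (γ : Γ) (j : ι) : (orbitFinset φ j).image (φ γ) = orbitFinset φ j := by
  refine eq_of_subset_of_card_le (fun x hx => ?_) (card_image_of_injective _ (φ γ).injective).ge
  obtain ⟨_, hy, rfl⟩ := mem_image.1 hx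
  obtain ⟨δ, rfl⟩ := (mem_orbitFinset φ).1 hy
  exact (mem_orbitFinset φ).2 ⟨γ * δ, by simp⟩

theorem card_orbitFinset_ne_zero (K : Type*) [AddMonoidWithOne K] [CharZero K] (i : ι) :
    (#(orbitFinset φ i) : K) ≠ 0 :=
  Nat.cast_ne_zero.2 (card_pos.2 ⟨i, mem_orbitFinset_self φ i⟩).ne'

noncomputable def orbitAverage (K : Type*) [Field K] (j : ι) : ι → K :=
  ((#(orbitFinset φ j) : K))⁻¹ • ∑ k ∈ orbitFinset φ j, Pi.single k 1

noncomputable def orbitCartan (Adj : ι → ι → Prop) (j i : ι) : ℤ :=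
  ∑ k ∈ orbitFinset φ j, cartanEntry Adj k i

variable {φ} {Adj : ι → ι → Prop}

theorem orbitCartan_perm_right (hφ : ∀ γ i j, Adj (φ γ i) (φ γ j) ↔ Adj i j) (γ : Γ) (j i : ι) :
    orbitCartan φ Adj j (φ γ i) = orbitCartan φ Adj j i := by
  unfold orbitCartan
  conv_lhs => rw [← image_orbitFinset φ γ j]
  rw [sum_image fun _ _ _ _ h => (φ γ).injective h]
  exact sum_congr rfl fun k _ => cartanEntry_perm (hφ γ) k i

theorem orbitCartan_self_eq_one_or_two (hAdj : ∀ i j, Adj i j → Adj j i) {j : ι}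
    (horbit : (∀ k ∈ orbitFinset φ j, ∀ l ∈ orbitFinset φ j, k ≠ l → ¬ Adj k l) ∨
      ∃ j', j ≠ j' ∧ Adj j j' ∧ orbitFinset φ j = {j, j'}) :
    orbitCartan φ Adj j j = 1 ∨ orbitCartan φ Adj j j = 2 := by
  rcases horbit with hdisc | ⟨j', hne, hjj', hpair⟩
  · right
    rw [orbitCartan, sum_eq_single_of_mem j (mem_orbitFinset_self φ j) fun k hk hkj => ?_]
    · simp [cartanEntry]
    · simp [cartanEntry, hkj, hdisc k hk j (mem_orbitFinset_self φ j) hkj]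
  · left
    rw [orbitCartan, hpair, sum_pair hne]
    simp [cartanEntry, hne.symm, hAdj _ _ hjj']

variable {K : Type*} [Field K] [CharZero K] {B : LinearMap.BilinForm K (ι → K)}
  (hB : ∀ i j, B (Pi.single i 1) (Pi.single j 1) = cartanEntry Adj i j)
include hB

omit [CharZero K] in
theorem bilin_orbitAverage_single (j l : ι) :
    B (orbitAverage φ K j) (Pi.single l 1) = orbitCartan φ Adj j l / #(orbitFinset φ j) := by
  simp [orbitAverage, orbitCartan, hB, div_eq_inv_mul]

variable (hφ : ∀ γ i j, Adj (φ γ i) (φ γ j) ↔ Adj i j)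
include hφ

theorem bilin_orbitAverage (j i : ι) :
    B (orbitAverage φ K j) (orbitAverage φ K i) = orbitCartan φ Adj j i / #(orbitFinset φ j) := by
  have hconst : ∀ l ∈ orbitFinset φ i,
      B (orbitAverage φ K j) (Pi.single l 1) = orbitCartan φ Adj j i / #(orbitFinset φ j) := by
    intro l hl
    obtain ⟨γ, rfl⟩ := (mem_orbitFinset φ).1 hl
    rw [bilin_orbitAverage_single hB, orbitCartan_perm_right hφ]
  rw [orbitAverage.eq_1 φ K i, map_smul, map_sum, sum_congr rfl hconst, sum_const, nsmul_eq_mul,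
    smul_eq_mul, inv_mul_cancel_left₀ (card_orbitFinset_ne_zero φ K i)]

variable {j : ι} (hj : orbitCartan φ Adj j j = 1 ∨ orbitCartan φ Adj j j = 2)
include hj

theorem bilin_orbitAverage_self_ne_zero : B (orbitAverage φ K j) (orbitAverage φ K j) ≠ 0 := by
  rw [bilin_orbitAverage hB hφ]
  rcases hj with h | h <;> rw [h] <;>
    exact div_ne_zero (by norm_num) (card_orbitFinset_ne_zero φ K j)

theorem exists_int_two_mul_bilin_orbitAverage_div (i : ι) :
    ∃ n : ℤ, 2 * B (orbitAverage φ K j) (orbitAverage φ K i) /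
      B (orbitAverage φ K j) (orbitAverage φ K j) = n := by
  have hcard := card_orbitFinset_ne_zero φ K j
  rw [bilin_orbitAverage hB hφ, bilin_orbitAverage hB hφ]
  rcases hj with h | h <;> rw [h]
  · exact ⟨2 * orbitCartan φ Adj j i, by push_cast; field_simp⟩
  · exact ⟨orbitCartan φ Adj j i, by push_cast; field_simp⟩

end Folding

theorem stmt_3_general (ι : Type*) [DecidableEq ι]
    (Adj : ι → ι → Prop)
    (hAdjSymm : ∀ i j, Adj i j → Adj j i)
    (B : LinearMap.BilinForm ℚ (ι → ℚ))
    (hBsymm : ∀ v w, B v w = B w v)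
    (hBdiag : ∀ i : ι, B (Pi.single i 1) (Pi.single i 1) = 2)
    (hBadj : ∀ i j : ι, i ≠ j → Adj i j → B (Pi.single i 1) (Pi.single j 1) = -1)
    (hBnadj : ∀ i j : ι, i ≠ j → ¬ Adj i j → B (Pi.single i 1) (Pi.single j 1) = 0)
    (Γ : Type*) [Group Γ] [Fintype Γ]
    (φ : Γ →* Equiv.Perm ι)
    (hφ : ∀ (γ : Γ) (i j : ι), Adj (φ γ i) (φ γ j) ↔ Adj i j)
    (orb : ι → Finset ι)
    (horb : ∀ i : ι, orb i = Finset.image (fun γ : Γ => φ γ i) Finset.univ)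
    (e : ι → (ι → ℚ))
    (he : ∀ i : ι, e i = (((orb i).card : ℚ))⁻¹ • ∑ k ∈ orb i, Pi.single k (1 : ℚ))
    (horbits : ∀ j : ι,
      (∀ k ∈ orb j, ∀ l ∈ orb j, k ≠ l → ¬ Adj k l) ∨
      (∃ j' : ι, j ≠ j' ∧ Adj j j' ∧ orb j = {j, j'}))
    (Λ : Submodule ℤ (ι → ℚ))
    (hΛ : Λ = Submodule.span ℤ (Set.range e)) :
    (∀ i j : ι, ∃ n : ℤ, 2 * B (e j) (e i) / B (e j) (e j) = (n : ℚ)) ∧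
    (∀ j : ι,
      (fun x : ι → ℚ => x - (2 * B x (e j) / B (e j) (e j)) • e j) '' (Λ : Set (ι → ℚ))
        = (Λ : Set (ι → ℚ))) := by
  obtain rfl : orb = orbitFinset φ := funext horb
  obtain rfl : e = orbitAverage φ ℚ := funext he
  subst hΛ
  have hB := bilin_single_eq_cartanEntry hBdiag hBadj hBnadj
  have hself := fun j => orbitCartan_self_eq_one_or_two hAdjSymm (horbits j)
  have hint := fun i j => exists_int_two_mul_bilin_orbitAverage_div hB hφ (hself j) i
  exact ⟨hint, fun j => LinearMap.BilinForm.image_reflection_span_int hBsymm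
    (bilin_orbitAverage_self_ne_zero hB hφ (hself j)) fun i => hint i j⟩

theorem stmt_3 (ι : Type*) [Fintype ι] [DecidableEq ι]
    (Adj : ι → ι → Prop)
    (hAdjSymm : ∀ i j, Adj i j → Adj j i)
    (hAdjIrr : ∀ i, ¬ Adj i i)
    (B : LinearMap.BilinForm ℚ (ι → ℚ))
    (hBsymm : ∀ v w, B v w = B w v)
    (hBdiag : ∀ i : ι, B (Pi.single i 1) (Pi.single i 1) = 2)
    (hBadj : ∀ i j : ι, i ≠ j → Adj i j → B (Pi.single i 1) (Pi.single j 1) = -1)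
    (hBnadj : ∀ i j : ι, i ≠ j → ¬ Adj i j → B (Pi.single i 1) (Pi.single j 1) = 0)
    (Γ : Type*) [Group Γ] [Fintype Γ]
    (φ : Γ →* Equiv.Perm ι)
    (hφ : ∀ (γ : Γ) (i j : ι), Adj (φ γ i) (φ γ j) ↔ Adj i j)
    (orb : ι → Finset ι)
    (horb : ∀ i : ι, orb i = Finset.image (fun γ : Γ => φ γ i) Finset.univ)
    (e : ι → (ι → ℚ))
    (he : ∀ i : ι, e i = (((orb i).card : ℚ))⁻¹ • ∑ k ∈ orb i, Pi.single k (1 : ℚ))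
    (horbits : ∀ j : ι,
      (∀ k ∈ orb j, ∀ l ∈ orb j, k ≠ l → ¬ Adj k l) ∨
      (∃ j' : ι, j ≠ j' ∧ Adj j j' ∧ orb j = {j, j'}))
    (Λ : Submodule ℤ (ι → ℚ))
    (hΛ : Λ = Submodule.span ℤ (Set.range e)) :
    (∀ i j : ι, ∃ n : ℤ, 2 * B (e j) (e i) / B (e j) (e j) = (n : ℚ)) ∧
    (∀ j : ι,
      (fun x : ι → ℚ => x - (2 * B x (e j) / B (e j) (e j)) • e j) '' (Λ : Set (ι → ℚ))
        = (Λ : Set (ι → ℚ))) :=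
  stmt_3_general ι Adj hAdjSymm B hBsymm hBdiag hBadj hBnadj Γ φ hφ orb horb e he horbits Λ hΛ
end

section
/- Let V be a finite-dimensional vector space over ℚ, B a positive definite symmetric bilinear form on V (B(v, v) > 0 for all v ≠ 0), and Λ ⊆ V a finitely generated ℤ-submodule which spans V over ℚ. Then any group G of linear automorphisms of V satisfying B(g(v), g(w)) = B(v, w) for all v, w ∈ V and g(Λ) = Λ for all g ∈ G is finite. -/
/-!
The vectors of `Λ` in an ellipsoid `B x x ≤ c` are finitely many: in a `ℤ`-basis of `Λ`, which is
also a `ℚ`-basis of `V`, their coordinates are integers, and each coordinate functional is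
`B d ·` for some `d`, hence bounded on the ellipsoid by Cauchy-Schwarz. An isometry `g ∈ G` maps
each vector `s` of a finite generating set of `Λ` into the finite set of lattice vectors with
`B x x ≤ B s s`, and `g` is determined by these images since they span `V`.
-/

open Module

namespace LinearMap.BilinForm

variable {K V : Type*} [Field K] [LinearOrder K] [AddCommGroup V] [Module K V]

lemma apply_self_nonneg {B : LinearMap.BilinForm K V} (hpos : ∀ x, x ≠ 0 → 0 < B x x) (x : V) :
    0 ≤ B x x := by
  obtain rfl | hx := eq_or_ne x 0
  · simp
  · exact (hpos x hx).le

lemma exists_sq_le_mul_apply_self [IsStrictOrderedRing K] [FiniteDimensional K V]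
    {B : LinearMap.BilinForm K V} (hB : LinearMap.IsSymm B) (hpos : ∀ x, x ≠ 0 → 0 < B x x)
    (φ : Dual K V) :
    ∃ C, 0 ≤ C ∧ ∀ x, φ x ^ 2 ≤ C * B x x := by
  have hB' : B.Nondegenerate := (B.nondegenerate_iff' (apply_self_nonneg hpos) hB).mpr hpos
  set d := (B.toDual hB').symm φ
  refine ⟨B d d, apply_self_nonneg hpos d, fun x => ?_⟩
  rw [← apply_toDual_symm_apply (hB := hB') φ x]
  exact B.apply_sq_le_of_symm (apply_self_nonneg hpos) hB d x

end LinearMap.BilinForm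

lemma Module.Basis.extendOfIsLattice_repr {R K V κ : Type*} [CommRing R] [Field K] [Algebra R K]
    [IsFractionRing R K] [AddCommGroup V] [Module K V] [Module R V] [IsScalarTower R K V]
    {M : Submodule R V} [M.IsLattice K] (b : Basis κ R M) (x : M) (i : κ) :
    (b.extendOfIsLattice K).repr x i = algebraMap R K (b.repr x i) := by
  suffices h : ((b.extendOfIsLattice K).coord i).restrictScalars R ∘ₗ M.subtype =
      Algebra.linearMap R K ∘ₗ b.coord i from LinearMap.congr_fun h x
  refine b.ext fun j => ?_
  have hj : ((b j : M) : V) = b.extendOfIsLattice K j := (b.extendOfIsLattice_apply K j).symm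
  rw [LinearMap.comp_apply, LinearMap.comp_apply, Submodule.subtype_apply, hj,
    LinearMap.restrictScalars_apply, Basis.coord_apply, Basis.coord_apply, Basis.repr_self,
    Basis.repr_self]
  obtain rfl | hji := eq_or_ne j i <;> simp [*]

lemma Int.abs_le_ceil_of_sq_le {K : Type*} [Field K] [LinearOrder K] [IsStrictOrderedRing K]
    [FloorRing K] {n : ℤ} {q : K} (h : (n : K) ^ 2 ≤ q) : |n| ≤ ⌈q⌉ :=
  calc |n| ≤ n ^ 2 := by rw [Int.abs_eq_natAbs]; exact Int.natAbs_le_self_sq n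
    _ ≤ ⌈q⌉ := Int.le_ceil_iff.mpr (by push_cast; linarith [Int.le_ceil q])

theorem Submodule.IsLattice.finite_setOf_mem_apply_self_le {V : Type*} [AddCommGroup V]
    [Module ℚ V] [FiniteDimensional ℚ V] (Λ : Submodule ℤ V) [Λ.IsLattice ℚ]
    {B : LinearMap.BilinForm ℚ V} (hB : LinearMap.IsSymm B) (hpos : ∀ x, x ≠ 0 → 0 < B x x)
    (c : ℚ) : {x | x ∈ Λ ∧ B x x ≤ c}.Finite := by
  let b := Module.Free.chooseBasis ℤ Λ
  choose C hC₀ hC using fun i =>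
    B.exists_sq_le_mul_apply_self hB hpos ((b.extendOfIsLattice ℚ).coord i)
  let M : _ → ℤ := fun i => ⌈C i * c⌉
  refine ((Set.finite_Icc (-M) M).image fun n => ((b.equivFun.symm n : Λ) : V)).subset ?_
  rintro x ⟨hxΛ, hxc⟩
  have hbound : ∀ i, |b.equivFun ⟨x, hxΛ⟩ i| ≤ M i := fun i =>
    Int.abs_le_ceil_of_sq_le <|
      calc ((b.repr ⟨x, hxΛ⟩ i : ℤ) : ℚ) ^ 2 = (b.extendOfIsLattice ℚ).coord i x ^ 2 := by
            rw [Basis.coord_apply, b.extendOfIsLattice_repr (x := ⟨x, hxΛ⟩)]; rfl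
        _ ≤ C i * B x x := hC i x
        _ ≤ C i * c := mul_le_mul_of_nonneg_left hxc (hC₀ i)
  exact ⟨_, ⟨fun i => (abs_le.mp (hbound i)).1, fun i => (abs_le.mp (hbound i)).2⟩, by simp⟩

lemma Set.Finite.of_span_eq_top_of_finite_image_apply {R M N : Type*} [Semiring R]
    [AddCommMonoid M] [Module R M] [AddCommMonoid N] [Module R N] {F : Set (M →ₗ[R] N)} {S : Set M}
    (hS : S.Finite) (hspan : Submodule.span R S = ⊤) (hF : ∀ s ∈ S, ((· s) '' F).Finite) :
    F.Finite := by
  have : Finite S := hS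
  refine Set.Finite.of_finite_image (f := fun f s => f (s : S))
    ((Set.Finite.pi' fun s : S => hF s s.2).subset ?_)
    fun f _ g _ hfg => LinearMap.ext_on hspan fun s hs => congrFun hfg ⟨s, hs⟩
  rintro _ ⟨f, hf, rfl⟩ s
  exact ⟨f, hf, rfl⟩

theorem stmt_7 (V : Type*) [AddCommGroup V] [Module ℚ V] [FiniteDimensional ℚ V]
    (B : LinearMap.BilinForm ℚ V)
    (hsymm : ∀ v w : V, B v w = B w v)
    (hpos : ∀ v : V, v ≠ 0 → 0 < B v v)
    (Λ : Submodule ℤ V)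
    (hfg : Λ.FG)
    (hspan : Submodule.span ℚ (Λ : Set V) = ⊤)
    (G : Subgroup (V ≃ₗ[ℚ] V))
    (hGB : ∀ g ∈ G, ∀ v w : V, B (g v) (g w) = B v w)
    (hGΛ : ∀ g ∈ G, (g : V → V) '' (Λ : Set V) = (Λ : Set V)) :
    Finite G := by
  have : Λ.IsLattice ℚ := ⟨hfg, hspan⟩
  obtain ⟨S, rfl⟩ := hfg
  have hSspan : Submodule.span ℚ (S : Set V) = ⊤ := by
    rwa [Submodule.span_span_of_tower] at hspan
  have hfin : ((fun g : V ≃ₗ[ℚ] V => (g : V →ₗ[ℚ] V)) '' G).Finite := by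
    refine .of_span_eq_top_of_finite_image_apply S.finite_toSet hSspan fun s hs => ?_
    refine (Submodule.IsLattice.finite_setOf_mem_apply_self_le (Submodule.span ℤ S) ⟨hsymm⟩ hpos
      (B s s)).subset ?_
    rintro _ ⟨_, ⟨g, hg, rfl⟩, rfl⟩
    refine ⟨?_, (hGB g hg s s).le⟩
    rw [← SetLike.mem_coe, ← hGΛ g hg]
    exact ⟨s, Submodule.subset_span hs, rfl⟩
  exact (hfin.of_finite_image LinearEquiv.toLinearMap_injective.injOn).to_subtype
end
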